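/- arXiv:2410.10439 — 8 statements merged into one kernel-verified Lean document; each statement's English description precedes it below -/
import Mathlib

section
/- If Z is a DD-bisimulation between models M and M' with (w,w') ∈ Z, then for every ML(DD)-formula φ: M,w ⊨ φ if and only if M',w' ⊨ φ. -/
/-- ML(DD)-formulas over propositional variables indexed by ℕ. -/
inductive MLDD : Type
  | prop : ℕ → MLDD
  | neg : MLDD → MLDD
  | or : MLDD → MLDD → MLDD
  | dia : MLDD → MLDD
  | dd : MLDD → MLDD → MLDD

/-- A Kripke model: a nonempty set of worlds, an accessibility relation, a valuation. -/
structure Model where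
  W : Type
  ne : Nonempty W
  R : W → W → Prop
  V : ℕ → W → Prop

/-- Satisfaction relation for ML(DD). -/
def sat (M : Model) : M.W → MLDD → Prop
  | w, .prop p => M.V p w
  | w, .neg φ => ¬ sat M w φ
  | w, .or φ ψ => sat M w φ ∨ sat M w ψ
  | w, .dia φ => ∃ v, M.R w v ∧ sat M v φ
  | _, .dd φ ψ => ∃ v, sat M v φ ∧ sat M v ψ ∧ ∀ v', v' ≠ v → ¬ sat M v' φ

/-- A DD-bisimulation between models `M` and `M'`. -/
def IsDDBisim (M M' : Model) (Z : M.W → M'.W → Prop) : Prop :=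
  (∀ w, ∃ w', Z w w') ∧                          -- serial
  (∀ w', ∃ w, Z w w') ∧                          -- surjective
  (∀ w w', Z w w' →
    ((∀ p, M.V p w ↔ M'.V p w') ∧                                  -- Atom
     (∀ v, M.R w v → ∃ v', Z v v' ∧ M'.R w' v') ∧                   -- Zig
     (∀ v', M'.R w' v' → ∃ v, Z v v' ∧ M.R w v) ∧                   -- Zag
     (({x' | Z w x'} = {w'}) ↔ ({x | Z x w'} = {w}))))              -- Singular

/-!
Induction on formulas. Only `@_φ ψ` is not local: it says that `φ` holds at exactly one world,
and that world satisfies `ψ`. If `v` is the unique `φ`-world of `M` and `Z v v'`, then every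
`Z`-preimage of `v'` satisfies `φ` (induction hypothesis), so `Z⁻¹(v') = {v}`; by Singular
`Z(v) = {v'}`, and surjectivity shows that any `φ`-world of `M'` is a `Z`-image of `v`, hence
equal to `v'`. Every clause of a DD-bisimulation is symmetric, so each modal case only needs to be
proved from `M` to `M'` and is then applied to the converse relation.
-/

namespace IsDDBisim

variable {M M' : Model} {Z : M.W → M'.W → Prop}

theorem serial (hZ : IsDDBisim M M' Z) (w : M.W) : ∃ w', Z w w' := hZ.1 w

theorem surjective (hZ : IsDDBisim M M' Z) (w' : M'.W) : ∃ w, Z w w' := hZ.2.1 w'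

theorem atom (hZ : IsDDBisim M M' Z) {w : M.W} {w' : M'.W} (h : Z w w') (p : ℕ) :
    M.V p w ↔ M'.V p w' :=
  (hZ.2.2 w w' h).1 p

theorem zig (hZ : IsDDBisim M M' Z) {w v : M.W} {w' : M'.W} (h : Z w w') (hv : M.R w v) :
    ∃ v', Z v v' ∧ M'.R w' v' :=
  (hZ.2.2 w w' h).2.1 v hv

theorem zag (hZ : IsDDBisim M M' Z) {w : M.W} {w' v' : M'.W} (h : Z w w') (hv' : M'.R w' v') :
    ∃ v, Z v v' ∧ M.R w v :=
  (hZ.2.2 w w' h).2.2.1 v' hv'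

theorem singular (hZ : IsDDBisim M M' Z) {w : M.W} {w' : M'.W} (h : Z w w') :
    {x' | Z w x'} = {w'} ↔ {x | Z x w'} = {w} :=
  (hZ.2.2 w w' h).2.2.2

theorem symm (hZ : IsDDBisim M M' Z) : IsDDBisim M' M (flip Z) :=
  ⟨hZ.surjective, hZ.serial, fun _ _ h =>
    ⟨fun p => (hZ.atom h p).symm, fun _ => hZ.zag h, fun _ => hZ.zig h, (hZ.singular h).symm⟩⟩

theorem unique_of_unique (hZ : IsDDBisim M M' Z) {P : M.W → Prop} {P' : M'.W → Prop}
    (hP : ∀ v v', Z v v' → (P v ↔ P' v')) {v : M.W} {v' : M'.W} (hvv' : Z v v') (hv : P v)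
    (huniq : ∀ u, u ≠ v → ¬ P u) : ∀ u', u' ≠ v' → ¬ P' u' := by
  have hpre : {x | Z x v'} = {v} := by
    ext x
    refine ⟨fun hx => ?_, fun hx => hx ▸ hvv'⟩
    by_contra hxv
    exact huniq x hxv ((hP x v' hx).2 ((hP v v' hvv').1 hv))
  have himg : {x' | Z v x'} = {v'} := (hZ.singular hvv').2 hpre
  intro u' hne hu'
  obtain ⟨u, huu'⟩ := hZ.surjective u'
  obtain rfl : u = v := by
    by_contra huv
    exact huniq u huv ((hP u u' huu').2 hu')
  exact hne (himg ▸ huu' : u' ∈ ({v'} : Set M'.W))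

variable {φ ψ : MLDD}

theorem sat_dia (hZ : IsDDBisim M M' Z) (hφ : ∀ v v', Z v v' → (sat M v φ ↔ sat M' v' φ))
    {w : M.W} {w' : M'.W} (hww' : Z w w') (h : sat M w (.dia φ)) : sat M' w' (.dia φ) := by
  obtain ⟨v, hwv, hv⟩ := h
  obtain ⟨v', hvv', hw'v'⟩ := hZ.zig hww' hwv
  exact ⟨v', hw'v', (hφ v v' hvv').1 hv⟩

theorem sat_dd (hZ : IsDDBisim M M' Z) (hφ : ∀ v v', Z v v' → (sat M v φ ↔ sat M' v' φ))
    (hψ : ∀ v v', Z v v' → (sat M v ψ ↔ sat M' v' ψ)) {w : M.W} {w' : M'.W}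
    (h : sat M w (.dd φ ψ)) : sat M' w' (.dd φ ψ) := by
  obtain ⟨v, hvφ, hvψ, huniq⟩ := h
  obtain ⟨v', hvv'⟩ := hZ.serial v
  exact ⟨v', (hφ v v' hvv').1 hvφ, (hψ v v' hvv').1 hvψ,
    hZ.unique_of_unique hφ hvv' hvφ huniq⟩

end IsDDBisim

/-- If `Z` is a DD-bisimulation between `M` and `M'` with `(w,w') ∈ Z`, then `w` and `w'`
satisfy exactly the same ML(DD)-formulas. -/
theorem dd_bisim_invariance (M M' : Model) (Z : M.W → M'.W → Prop)
    (hZ : IsDDBisim M M' Z) (w : M.W) (w' : M'.W) (hww' : Z w w') :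
    ∀ φ : MLDD, sat M w φ ↔ sat M' w' φ := by
  intro φ
  induction φ generalizing w w' with
  | prop p => exact hZ.atom hww' p
  | neg φ ih => exact not_congr (ih w w' hww')
  | or φ ψ ihφ ihψ => exact or_congr (ihφ w w' hww') (ihψ w w' hww')
  | dia φ ih =>
    exact ⟨hZ.sat_dia ih hww', hZ.symm.sat_dia (fun v' v h => (ih v v' h).symm) hww'⟩
  | dd φ ψ ihφ ihψ =>
    exact ⟨hZ.sat_dd ihφ ihψ,
      hZ.symm.sat_dd (fun v' v h => (ihφ v v' h).symm) (fun v' v h => (ihψ v v' h).symm)⟩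
end

section
/- For every ML(DD)-formula φ there exists an MLC-formula φ' such that for every model M and every world w of M: M,w ⊨ φ if and only if M,w ⊨ φ'. In particular, @_φψ is equivalent to ∃_{=1}φ ∧ ∃_{=1}(φ∧ψ): for every model M, world w, and ML(DD)-formulas φ,ψ, M,w ⊨ @_φψ iff φ holds in exactly one world v of M and ψ also holds in that world v. -/
/-- MLC-formulas (modal logic with counting operators ∃_{≥n}). -/
inductive MLC : Type
  | prop : ℕ → MLC
  | neg : MLC → MLC
  | or : MLC → MLC → MLC
  | dia : MLC → MLC
  | count : ℕ → MLC → MLC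

/-- Satisfaction relation for MLC: `∃_{≥n} φ` holds iff at least `n` distinct worlds
satisfy `φ`. -/
def satC (M : Model) : M.W → MLC → Prop
  | w, .prop p => M.V p w
  | w, .neg φ => ¬ satC M w φ
  | w, .or φ ψ => satC M w φ ∨ satC M w ψ
  | w, .dia φ => ∃ v, M.R w v ∧ satC M v φ
  | _, .count n φ => ∃ f : Fin n → M.W, Function.Injective f ∧ ∀ k, satC M (f k) φ

/-!
`@_φ ψ` says that `φ` has exactly one witness and that this witness satisfies `ψ`, which is
`∃_{=1}φ ∧ ∃_{=1}(φ ∧ ψ)`. Since `∃_{≥n}φ` holds exactly when the extension of `φ` has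
cardinality at least `n`, `∃_{=1}φ` expresses unique existence; translating the remaining
connectives homomorphically then gives an equivalent MLC-formula by structural induction.
-/

open Cardinal

theorem exists_and_forall_ne_not_iff {α : Type*} {p q : α → Prop} :
    (∃ v, p v ∧ q v ∧ ∀ v', v' ≠ v → ¬ p v') ↔ (∃! v, p v) ∧ ∃! v, p v ∧ q v := by
  constructor
  · rintro ⟨v, hp, hq, huniq⟩
    have hv : ∀ u, p u → u = v := fun u hu => by_contra fun hne => huniq u hne hu
    exact ⟨⟨v, hp, hv⟩, ⟨v, ⟨hp, hq⟩, fun u hu => hv u hu.1⟩⟩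
  · rintro ⟨⟨v, hp, hv⟩, ⟨u, ⟨hpu, hqu⟩, -⟩⟩
    obtain rfl := hv u hpu
    exact ⟨u, hpu, hqu, fun v' hne hv' => hne (hv v' hv')⟩

theorem sat_dd_iff (M : Model) (w : M.W) (φ ψ : MLDD) :
    sat M w (.dd φ ψ) ↔ (∃! v, sat M v φ) ∧ ∃! v, sat M v φ ∧ sat M v ψ :=
  exists_and_forall_ne_not_iff

namespace MLC

def and (a b : MLC) : MLC := .neg (.or (.neg a) (.neg b))

/-- `∃_{=n} a`. -/
def countEq (n : ℕ) (a : MLC) : MLC := (count n a).and (.neg (count (n + 1) a))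

end MLC

section

variable (M : Model) (w : M.W)

theorem satC_and (a b : MLC) : satC M w (a.and b) ↔ satC M w a ∧ satC M w b := by
  simp only [MLC.and, satC, not_or, not_not]

theorem satC_count_iff (n : ℕ) (a : MLC) :
    satC M w (.count n a) ↔ (n : Cardinal) ≤ #{v // satC M v a} := by
  rw [← mk_fin n, le_def]
  constructor
  · rintro ⟨f, hinj, hsat⟩
    exact ⟨⟨fun k => ⟨f k, hsat k⟩, fun i j h => hinj (congrArg Subtype.val h)⟩⟩
  · rintro ⟨f⟩
    exact ⟨fun k => f k, Subtype.val_injective.comp f.injective, fun k => (f k).2⟩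

theorem satC_countEq_iff (n : ℕ) (a : MLC) :
    satC M w (.countEq n a) ↔ #{v // satC M v a} = n := by
  rw [MLC.countEq, satC_and, satC, satC_count_iff, satC_count_iff, Nat.cast_add_one,
    ← succ_natCast, Order.succ_le_iff, not_lt, le_antisymm_iff, and_comm]

theorem satC_countEq_one_iff (a : MLC) :
    satC M w (.countEq 1 a) ↔ ∃! v, satC M v a := by
  rw [satC_countEq_iff, Nat.cast_one, eq_one_iff_unique, ← unique_iff_subsingleton_and_nonempty,
    unique_subtype_iff_existsUnique]

end

def MLDD.toMLC : MLDD → MLC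
  | .prop p => .prop p
  | .neg φ => .neg φ.toMLC
  | .or φ ψ => .or φ.toMLC ψ.toMLC
  | .dia φ => .dia φ.toMLC
  | .dd φ ψ => (MLC.countEq 1 φ.toMLC).and (.countEq 1 (φ.toMLC.and ψ.toMLC))

theorem satC_toMLC (M : Model) (w : M.W) (φ : MLDD) : satC M w φ.toMLC ↔ sat M w φ := by
  induction φ generalizing w with
  | prop p => rfl
  | neg φ ih => exact not_congr (ih w)
  | or φ ψ ihφ ihψ => exact or_congr (ihφ w) (ihψ w)
  | dia φ ih => exact exists_congr fun v => and_congr_right' (ih v)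
  | dd φ ψ ihφ ihψ =>
    simp only [MLDD.toMLC, satC_and, satC_countEq_one_iff, ihφ, ihψ, sat_dd_iff]

/-- For every ML(DD)-formula there is an equivalent MLC-formula; in particular `@_φψ` is
equivalent to `∃_{=1}φ ∧ ∃_{=1}(φ∧ψ)`: it holds at `w` iff `φ` holds in exactly one world
and `ψ` also holds in that world. -/
theorem mldd_into_mlc :
    (∀ φ : MLDD, ∃ φ' : MLC, ∀ (M : Model) (w : M.W), sat M w φ ↔ satC M w φ') ∧
    (∀ (M : Model) (w : M.W) (φ ψ : MLDD),
      sat M w (.dd φ ψ) ↔ (∃! v : M.W, sat M v φ) ∧ (∃! v : M.W, sat M v φ ∧ sat M v ψ)) :=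
  ⟨fun φ => ⟨φ.toMLC, fun M w => (satC_toMLC M w φ).symm⟩, sat_dd_iff⟩
end

section
/- There is no ML(DD)-formula χ such that for every model M = (W,R,V) with W finite and every world w ∈ W: M,w ⊨ χ if and only if W has exactly two elements. In particular, the MLC-formula ∃_{=2}⊤ cannot be expressed in ML(DD), so MLC is not less-than-or-equally expressive than ML(DD), already over the class of finite frames. -/
/-! In a model where every world sees every world and every variable holds everywhere, all
worlds satisfy the same formulas once there are at least two of them, so no definite description
`@_φ ψ` has a unique witness. The truth value of a formula there does not depend on the number of
worlds, so the two- and three-world such models cannot be told apart. -/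

abbrev Model.full (α : Type) [Nonempty α] : Model :=
  ⟨α, inferInstance, fun _ _ => True, fun _ _ => True⟩

def MLDD.fullValue : MLDD → Prop
  | .prop _ => True
  | .neg φ => ¬ φ.fullValue
  | .or φ ψ => φ.fullValue ∨ ψ.fullValue
  | .dia φ => φ.fullValue
  | .dd _ _ => False

theorem sat_full_iff_fullValue {α : Type} [Nontrivial α] (φ : MLDD) (w : α) :
    sat (Model.full α) w φ ↔ φ.fullValue := by
  induction φ generalizing w with
  | prop _ => exact iff_of_true trivial trivial
  | neg φ ih => exact not_congr (ih w)
  | or φ ψ ihφ ihψ => exact or_congr (ihφ w) (ihψ w)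
  | dia φ ih => exact ⟨fun ⟨v, _, hv⟩ => (ih v).mp hv, fun h => ⟨w, trivial, (ih w).mpr h⟩⟩
  | dd φ ψ ihφ =>
    refine iff_of_false ?_ id
    rintro ⟨v, hv, -, huniq⟩
    obtain ⟨u, hu⟩ := exists_ne v
    exact huniq u hu ((ihφ u).mpr ((ihφ v).mp hv))

/-- There is no ML(DD)-formula which, over finite models, holds at a world iff the domain
has exactly two elements: the MLC-formula ∃_{=2}⊤ cannot be expressed in ML(DD), already
over the class of finite frames. -/
theorem no_mldd_formula_defines_two :
    ¬ ∃ χ : MLDD, ∀ M : Model, Finite M.W →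
      ∀ w : M.W, (sat M w χ ↔ Nat.card M.W = 2) := by
  rintro ⟨χ, hχ⟩
  have h₂ : sat (Model.full (Fin 2)) 0 χ :=
    (hχ (Model.full (Fin 2)) (Finite.of_fintype _) 0).mpr (by simp)
  have h₃ : sat (Model.full (Fin 3)) 0 χ :=
    (sat_full_iff_fullValue χ 0).mpr ((sat_full_iff_fullValue χ 0).mp h₂)
  simpa using (hχ (Model.full (Fin 3)) (Finite.of_fintype _) 0).mp h₃
end

section
/- For every natural number n ≥ 2, there is no ML(DD)-formula χ such that for every model M = (W,R,V) and every world w ∈ W: M,w ⊨ χ if and only if W has exactly n elements. That is, ML(DD) cannot define any class of frames with domains of a fixed cardinality greater than 1. -/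
/-!
On a model whose accessibility relation and valuation are both total, every world satisfies
the same formulas, and as soon as there are two worlds no formula has a unique witness, so
every `@_φ ψ` is false. Hence the truth of a formula in such a model does not depend on the
size of the domain once it has at least two elements, and no formula separates the total
models on `n` and on `n + 1` worlds.
-/

def MLDD.fullTruth : MLDD → Prop
  | .prop _ => True
  | .neg φ => ¬ φ.fullTruth
  | .or φ ψ => φ.fullTruth ∨ ψ.fullTruth
  | .dia φ => φ.fullTruth
  | .dd _ _ => False

def fullModel (α : Type) [Nonempty α] : Model where
  W := α
  ne := inferInstance
  R _ _ := True
  V _ _ := True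

theorem sat_fullModel_iff {α : Type} [Nontrivial α] (w : α) (φ : MLDD) :
    sat (fullModel α) w φ ↔ φ.fullTruth := by
  induction φ generalizing w with
  | prop p => simp [sat, MLDD.fullTruth, fullModel]
  | neg φ ih => simp only [sat, MLDD.fullTruth, ih]
  | or φ ψ ihφ ihψ => simp only [sat, MLDD.fullTruth, ihφ, ihψ]
  | dia φ ih => exact ⟨fun ⟨v, _, hv⟩ => (ih v).1 hv, fun h => ⟨w, trivial, (ih w).2 h⟩⟩
  | dd φ ψ ihφ =>
    simp only [sat, MLDD.fullTruth, iff_false]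
    rintro ⟨v, hv, -, huniq⟩
    obtain ⟨v', hne⟩ := @exists_ne α _ v
    exact huniq v' hne ((ihφ v').2 ((ihφ v).1 hv))

/-- For every `n ≥ 2` there is no ML(DD)-formula which holds at a world of a model iff the
domain has exactly `n` elements: ML(DD) cannot define any class of frames with domains of a
fixed cardinality greater than 1. -/
theorem no_mldd_formula_defines_card (n : ℕ) (hn : 2 ≤ n) :
    ¬ ∃ χ : MLDD, ∀ (M : Model) (w : M.W), sat M w χ ↔ Nat.card M.W = n := by
  rintro ⟨χ, hχ⟩
  have truth_iff (k : ℕ) (hk : 2 ≤ k) : χ.fullTruth ↔ k = n := by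
    have : Nontrivial (Fin k) := Fin.nontrivial_iff_two_le.mpr hk
    have h := hχ (fullModel (Fin k)) ⟨0, by omega⟩
    rw [sat_fullModel_iff] at h
    simpa [fullModel] using h
  have := (truth_iff (n + 1) (by omega)).1 ((truth_iff n hn).2 rfl)
  omega
end

section
/- Let N be the model whose set of worlds is {0,1}×ℤ, with accessibility relation (i,n) R (j,m) iff i < j, or i = j and n < m (i.e., two copies of (ℤ,<), the first entirely preceding the second), and valuation V(p) = {0}×ℤ for a fixed propositional variable p and V(q) = ∅ for every other propositional variable q. Then: (a) for all n,m ∈ ℤ, the worlds (0,n) and (0,m) satisfy exactly the same ML(DD)-formulas, and the worlds (1,n) and (1,m) satisfy exactly the same ML(DD)-formulas; (b) no formula of the form @_φψ is satisfied at any world of N. -/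
/-- The model `N` over two copies of (ℤ,<), the first entirely preceding the second:
worlds are `{0,1} × ℤ`, `(i,n) R (j,m)` iff `i < j`, or `i = j` and `n < m`; the fixed
propositional variable `p` (index 0) holds exactly on the first copy `{0} × ℤ`, and every
other propositional variable is everywhere false. -/
def N : Model where
  W := Fin 2 × ℤ
  ne := ⟨(0, 0)⟩
  R := fun x y => x.1 < y.1 ∨ (x.1 = y.1 ∧ x.2 < y.2)
  V := fun p w => p = 0 ∧ w.1 = 0

/-! Translations `(i, n) ↦ (i, n + k)` are automorphisms of `N`, and ML(DD)-satisfaction is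
invariant under isomorphisms of models, so worlds in the same copy of ℤ satisfy the same
formulas. In particular a formula true at one world is true at infinitely many, so the
uniqueness clause of `@_φ ψ` always fails. -/

structure Model.Iso (M M' : Model) extends M.W ≃ M'.W where
  map_R_iff : ∀ x y, M'.R (toFun x) (toFun y) ↔ M.R x y
  map_V_iff : ∀ p x, M'.V p (toFun x) ↔ M.V p x

theorem Model.Iso.sat_iff {M M' : Model} (e : M.Iso M') (w : M.W) (φ : MLDD) :
    sat M' (e.toEquiv w) φ ↔ sat M w φ := by
  induction φ generalizing w with
  | prop p => exact e.map_V_iff p w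
  | neg φ ih => exact not_congr (ih w)
  | or φ ψ ihφ ihψ => exact or_congr (ihφ w) (ihψ w)
  | dia φ ih =>
    simp only [sat, e.toEquiv.surjective.exists, Equiv.toFun_as_coe, ← e.map_R_iff, ih]
  | dd φ ψ ihφ ihψ =>
    simp only [sat, e.toEquiv.surjective.exists, e.toEquiv.surjective.forall,
      e.toEquiv.injective.ne_iff, ihφ, ihψ]

def N.shift (k : ℤ) : N.Iso N where
  toEquiv := (Equiv.refl (Fin 2)).prodCongr (Equiv.addRight k)
  map_R_iff := by rintro ⟨i, a⟩ ⟨j, b⟩; simp [N]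
  map_V_iff _ _ := Iff.rfl

@[simp]
theorem N.shift_apply (k : ℤ) (i : Fin 2) (n : ℤ) : (N.shift k).toEquiv (i, n) = (i, n + k) :=
  rfl

theorem sat_N_iff_of_same_copy (i : Fin 2) (n m : ℤ) (φ : MLDD) :
    sat N (i, n) φ ↔ sat N (i, m) φ := by
  simpa using ((N.shift (m - n)).sat_iff (i, n) φ).symm

/-- (a) For all `n, m ∈ ℤ`, the worlds `(0,n)` and `(0,m)` of `N` satisfy exactly the same
ML(DD)-formulas, and so do `(1,n)` and `(1,m)`; (b) no formula of the form `@_φψ` is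
satisfied at any world of `N`. -/
theorem two_copies_of_int :
    (∀ n m : ℤ, ∀ φ : MLDD,
      (sat N ((0 : Fin 2), n) φ ↔ sat N ((0 : Fin 2), m) φ) ∧
      (sat N ((1 : Fin 2), n) φ ↔ sat N ((1 : Fin 2), m) φ)) ∧
    (∀ (w : N.W) (φ ψ : MLDD), ¬ sat N w (.dd φ ψ)) := by
  refine ⟨fun n m φ => ⟨sat_N_iff_of_same_copy 0 n m φ, sat_N_iff_of_same_copy 1 n m φ⟩, ?_⟩
  rintro - φ ψ ⟨⟨i, k⟩, hφ, -, hunique⟩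
  exact hunique (i, k + 1) (by simp [N]) ((sat_N_iff_of_same_copy i k (k + 1) φ).1 hφ)
end

section
/- There is no ML(DD)-formula χ such that for every model M based on a linear frame and every world w of M: M,w ⊨ χ if and only if the propositional variable p holds at at least one world of M. In particular, the MLC-formula ∃_{≥1}p cannot be expressed in ML(DD) over the class of linear frames. -/
/-- A model is based on a linear frame: its accessibility relation is irreflexive,
transitive, and trichotomous. -/
def Model.IsLinear (M : Model) : Prop :=
  (∀ w : M.W, ¬ M.R w w) ∧
  (∀ u v w : M.W, M.R u v → M.R v w → M.R u w) ∧
  (∀ u v : M.W, u ≠ v → M.R u v ∨ M.R v u)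

namespace Model

def IsAutomorphism (M : Model) (e : M.W ≃ M.W) : Prop :=
  (∀ a b, M.R (e a) (e b) ↔ M.R a b) ∧ ∀ p a, M.V p (e a) ↔ M.V p a

def HasFixedPointFreeAutomorphism (M : Model) : Prop :=
  ∃ e : M.W ≃ M.W, M.IsAutomorphism e ∧ ∀ w, e w ≠ w

theorem sat_apply_iff_of_isAutomorphism {M : Model} {e : M.W ≃ M.W}
    (he : M.IsAutomorphism e) (φ : MLDD) (w : M.W) : sat M (e w) φ ↔ sat M w φ := by
  induction φ generalizing w with
  | prop p => exact he.2 p w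
  | neg φ ih => exact not_congr (ih w)
  | or φ ψ ihφ ihψ => exact or_congr (ihφ w) (ihψ w)
  | dia φ ih =>
    simp only [sat, e.surjective.exists (p := fun v => M.R (e w) v ∧ sat M v φ), he.1, ih]
  | dd φ ψ => exact Iff.rfl

theorem not_sat_dd_of_hasFixedPointFreeAutomorphism {M : Model}
    (hM : M.HasFixedPointFreeAutomorphism) (φ ψ : MLDD) (w : M.W) : ¬ sat M w (.dd φ ψ) := by
  obtain ⟨e, he, hfree⟩ := hM
  rintro ⟨v, hφ, -, hunique⟩
  exact hunique (e v) (hfree v) ((sat_apply_iff_of_isAutomorphism he φ v).2 hφ)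

structure IsBisimulation (M N : Model) (Z : M.W → N.W → Prop) : Prop where
  atom : ∀ ⦃w x⦄, Z w x → ∀ p, M.V p w ↔ N.V p x
  forth : ∀ ⦃w x v⦄, Z w x → M.R w v → ∃ y, N.R x y ∧ Z v y
  back : ∀ ⦃w x y⦄, Z w x → N.R x y → ∃ v, M.R w v ∧ Z v y

theorem IsBisimulation.sat_iff {M N : Model} {Z : M.W → N.W → Prop} (hZ : IsBisimulation M N Z)
    (hM : M.HasFixedPointFreeAutomorphism) (hN : N.HasFixedPointFreeAutomorphism)
    (φ : MLDD) {w : M.W} {x : N.W} (hwx : Z w x) : sat M w φ ↔ sat N x φ := by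
  induction φ generalizing w x with
  | prop p => exact hZ.atom hwx p
  | neg φ ih => exact not_congr (ih hwx)
  | or φ ψ ihφ ihψ => exact or_congr (ihφ hwx) (ihψ hwx)
  | dia φ ih =>
    constructor
    · rintro ⟨v, hwv, hv⟩
      obtain ⟨y, hxy, hvy⟩ := hZ.forth hwx hwv
      exact ⟨y, hxy, (ih hvy).1 hv⟩
    · rintro ⟨y, hxy, hy⟩
      obtain ⟨v, hwv, hvy⟩ := hZ.back hwx hxy
      exact ⟨v, hwv, (ih hvy).2 hy⟩
  | dd φ ψ =>
    exact iff_of_false (not_sat_dd_of_hasFixedPointFreeAutomorphism hM φ ψ w)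
      (not_sat_dd_of_hasFixedPointFreeAutomorphism hN φ ψ x)

abbrev ofLinearOrder (α : Type) [LinearOrder α] [Nonempty α] (V : ℕ → α → Prop) : Model :=
  ⟨α, inferInstance, (· < ·), V⟩

section LinearOrder

variable {α : Type} [LinearOrder α] [Nonempty α] {V : ℕ → α → Prop}

theorem isLinear_ofLinearOrder : (ofLinearOrder α V).IsLinear :=
  ⟨lt_irrefl, fun _ _ _ => lt_trans, fun _ _ => lt_or_gt_of_ne⟩

theorem hasFixedPointFreeAutomorphism_ofLinearOrder [AddGroup α] [AddRightStrictMono α] {c : α}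
    (hc : c ≠ 0) (hV : ∀ p a, V p (a + c) ↔ V p a) :
    (ofLinearOrder α V).HasFixedPointFreeAutomorphism :=
  ⟨Equiv.addRight c, ⟨fun _ _ => add_lt_add_iff_right c, hV⟩, fun _ => add_ne_left.2 hc⟩

end LinearOrder

abbrev intModel : Model := ofLinearOrder ℤ fun _ _ => False

abbrev lexIntModel : Model := ofLinearOrder (ℤ ×ₗ ℤ) fun _ x => (ofLex x).1 < 0

theorem isBisimulation_intModel_lexIntModel :
    IsBisimulation intModel lexIntModel fun (_ : ℤ) (x : ℤ ×ₗ ℤ) => 0 ≤ (ofLex x).1 where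
  atom _ _ hx _ := iff_of_false not_false (not_lt.2 hx)
  forth _ (x : ℤ ×ₗ ℤ) _ hx _ :=
    ⟨x + toLex (0, 1), lt_add_of_pos_right x (by decide), by simpa using hx⟩
  back w _ _ hx hxy :=
    ⟨w + 1, lt_add_one w, hx.trans (Prod.Lex.monotone_fst _ _ hxy.le)⟩

end Model

open Model in
/-- There is no ML(DD)-formula which, over models based on linear frames, holds at a world
iff the propositional variable `p` (index 0) holds at at least one world: the MLC-formula
`∃_{≥1} p` cannot be expressed in ML(DD) over the class of linear frames. -/
theorem no_mldd_formula_somewhere_p_linear :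
    ¬ ∃ χ : MLDD, ∀ M : Model, M.IsLinear →
      ∀ w : M.W, (sat M w χ ↔ ∃ v : M.W, M.V 0 v) := by
  rintro ⟨χ, hχ⟩
  have hχint : ¬ sat intModel (0 : ℤ) χ := by
    simp [hχ intModel isLinear_ofLinearOrder]
  have hχlex : sat lexIntModel (toLex (0, 0)) χ :=
    (hχ lexIntModel isLinear_ofLinearOrder _).2 ⟨toLex (-1, 0), by decide⟩
  have hintFree : intModel.HasFixedPointFreeAutomorphism :=
    hasFixedPointFreeAutomorphism_ofLinearOrder one_ne_zero fun _ _ => Iff.rfl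
  have hlexFree : lexIntModel.HasFixedPointFreeAutomorphism :=
    hasFixedPointFreeAutomorphism_ofLinearOrder (c := toLex (0, 1)) (by decide)
      fun _ _ => by simp
  exact hχint ((isBisimulation_intModel_lexIntModel.sat_iff hintFree hlexFree χ le_rfl).2 hχlex)
end

section
/- For any ML(DD)-formula ψ, any n ≥ 1, any model M based on the integer frame (ℤ,<), and any w ∈ ℤ: there are at least n distinct integers v with M,v ⊨ ψ if and only if M,w ⊨ ◇ψ_n ∨ @_{(ψ_n ∧ ¬◇ψ_n)}⊤, where ψ_n = ψ ∧ ◇(ψ ∧ ◇(ψ ∧ ... )) with n occurrences of ψ. That is, over (ℤ,<) the counting operator ∃_{≥n} is expressible in ML(DD). -/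
/-- Conjunction, as the usual abbreviation. -/
def mand (φ ψ : MLDD) : MLDD := .neg (.or (.neg φ) (.neg ψ))

/-- ⊤, as a tautology (p ∨ ¬p). -/
def mtop : MLDD := .or (.prop 0) (.neg (.prop 0))

/-- `psiIter ψ k` is the formula `ψ_{k+1}`, where `ψ_1 = ψ` and `ψ_{k+1} = ψ ∧ ◇ψ_k`. -/
def psiIter (ψ : MLDD) : ℕ → MLDD
  | 0 => ψ
  | k + 1 => mand ψ (.dia (psiIter ψ k))

/-- The model based on the integer frame (ℤ,<) with valuation `V`. -/
def zModel (V : ℕ → ℤ → Prop) : Model where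
  W := ℤ
  ne := ⟨0⟩
  R := fun w v => w < v
  V := V

/-! Over a strict linear order, `ψ_{k+1}` holds at `v` exactly when `v` is the least element of
some `(k+1)`-element set of `ψ`-points, so `ψ_n` is satisfiable iff at least `n` points satisfy
`ψ`. The formula `◇ψ_n ∨ @_{ψ_n ∧ ¬◇ψ_n}⊤` says that some `ψ_n`-point lies above `w` or that the
`ψ_n`-points have a greatest element (which is then the unique point where `ψ_n ∧ ¬◇ψ_n` holds).
In `ℤ` a nonempty set is unbounded above or has a greatest element, so this is again just
satisfiability of `ψ_n`. -/

section Connectives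

variable {M : Model} {w : M.W} {φ χ : MLDD}

lemma sat_mand : sat M w (mand φ χ) ↔ sat M w φ ∧ sat M w χ := by
  simp only [mand, sat, not_or, not_not]

lemma sat_mtop : sat M w mtop := em _

lemma sat_dd_mtop : sat M w (.dd φ mtop) ↔ ∃! v, sat M v φ := by
  simp only [sat, sat_mtop, true_and, ExistsUnique, ne_eq, not_imp_not]

end Connectives

section LinearFrame

variable {M : Model} [LinearOrder M.W] (hR : ∀ u v, M.R u v ↔ u < v)
include hR

lemma sat_mand_neg_dia_self_iff_isGreatest {φ : MLDD} {v : M.W} :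
    sat M v (mand φ (.neg (.dia φ))) ↔ IsGreatest {x | sat M x φ} v := by
  simp only [sat_mand, sat, hR, not_exists, not_and, IsGreatest, mem_upperBounds,
    Set.mem_ofPred_eq]
  exact and_congr_right fun _ => forall_congr' fun x => by rw [imp_not_comm, not_lt]

lemma sat_psiIter_iff {ψ : MLDD} {k : ℕ} {v : M.W} :
    sat M v (psiIter ψ k) ↔
      ∃ s : Finset M.W, s.card = k + 1 ∧ IsLeast (↑s) v ∧ ∀ x ∈ s, sat M x ψ := by
  induction k generalizing v with
  | zero =>
    simp only [psiIter, zero_add, Finset.card_eq_one]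
    refine ⟨fun h => ⟨{v}, ⟨v, rfl⟩, by simp, by simpa⟩, ?_⟩
    rintro ⟨s, ⟨a, rfl⟩, hv, hs⟩
    rw [Finset.coe_singleton] at hv
    rw [hv.unique isLeast_singleton]
    simpa using hs
  | succ k ih =>
    simp only [psiIter, sat_mand, sat, hR, ih]
    constructor
    · rintro ⟨hψ, u, hvu, s, hcard, hu, hs⟩
      have hvs : v ∉ s := fun h => (hvu.trans_le (hu.2 h)).false
      refine ⟨insert v s, by rw [Finset.card_insert_of_notMem hvs, hcard], ?_, ?_⟩
      · refine ⟨Finset.mem_insert_self v s, ?_⟩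
        rw [Finset.coe_insert, lowerBounds_insert]
        exact ⟨le_rfl, fun x hx => (hvu.trans_le (hu.2 hx)).le⟩
      · exact (Finset.forall_mem_insert _ _ _).2 ⟨hψ, hs⟩
    · rintro ⟨s, hcard, hv, hs⟩
      have hne : (s.erase v).Nonempty := by
        rw [← Finset.card_pos, Finset.card_erase_of_mem hv.1]; omega
      have hmin := (s.erase v).min'_mem hne
      refine ⟨hs v hv.1, (s.erase v).min' hne, ?_, s.erase v, ?_, Finset.isLeast_min' _ hne,
        fun x hx => hs x (Finset.mem_of_mem_erase hx)⟩
      · exact lt_of_le_of_ne (hv.2 (Finset.mem_of_mem_erase hmin))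
          (Finset.ne_of_mem_erase hmin).symm
      · rw [Finset.card_erase_of_mem hv.1, hcard]; rfl

lemma exists_sat_psiIter_iff {ψ : MLDD} {k : ℕ} :
    (∃ v, sat M v (psiIter ψ k)) ↔ ∃ s : Finset M.W, s.card = k + 1 ∧ ∀ x ∈ s, sat M x ψ := by
  simp only [sat_psiIter_iff hR]
  refine ⟨fun ⟨_, s, hcard, _, hs⟩ => ⟨s, hcard, hs⟩, fun ⟨s, hcard, hs⟩ => ?_⟩
  have hne : s.Nonempty := by rw [← Finset.card_pos]; omega
  exact ⟨s.min' hne, s, hcard, s.isLeast_min' hne, hs⟩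

lemma sat_dia_or_dd_greatest_iff {φ : MLDD} {w : M.W} :
    sat M w (.or (.dia φ) (.dd (mand φ (.neg (.dia φ))) mtop)) ↔
      (∃ v, w < v ∧ sat M v φ) ∨ ∃ v, IsGreatest {x | sat M x φ} v := by
  simp only [sat.eq_3, sat.eq_4, hR, sat_dd_mtop, sat_mand_neg_dia_self_iff_isGreatest hR]
  exact or_congr_right ⟨fun ⟨v, hv, _⟩ => ⟨v, hv⟩, fun ⟨v, hv⟩ => ⟨v, hv, fun _ h => h.unique hv⟩⟩

end LinearFrame

lemma exists_injective_fin_iff_exists_finset {α : Type*} {P : α → Prop} {n : ℕ} :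
    (∃ f : Fin n → α, Function.Injective f ∧ ∀ k, P (f k)) ↔
      ∃ s : Finset α, s.card = n ∧ ∀ x ∈ s, P x := by
  classical
  constructor
  · rintro ⟨f, hf, hP⟩
    exact ⟨Finset.univ.image f, by simp [Finset.card_image_of_injective _ hf], by simpa using hP⟩
  · rintro ⟨s, rfl, hP⟩
    exact ⟨(↑) ∘ s.equivFin.symm, Subtype.val_injective.comp s.equivFin.symm.injective,
      fun k => hP _ (s.equivFin.symm k).2⟩

lemma Int.exists_gt_mem_or_exists_isGreatest_iff {S : Set ℤ} (w : ℤ) :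
    ((∃ v, w < v ∧ v ∈ S) ∨ ∃ v, IsGreatest S v) ↔ S.Nonempty := by
  refine ⟨by rintro (⟨v, -, hv⟩ | ⟨v, hv, -⟩) <;> exact ⟨v, hv⟩, fun hS => ?_⟩
  by_cases hbdd : BddAbove S
  · obtain ⟨v, hv, hmax⟩ := Int.exists_greatest_of_bdd hbdd hS
    exact Or.inr ⟨v, hv, hmax⟩
  · obtain ⟨v, hv, hwv⟩ := not_bddAbove_iff.1 hbdd w
    exact Or.inl ⟨v, hwv, hv⟩

instance zModel.instLinearOrder (V : ℕ → ℤ → Prop) : LinearOrder (zModel V).W :=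
  inferInstanceAs (LinearOrder ℤ)

/-- Over the integer frame (ℤ,<), for any `n ≥ 1`: there are at least `n` distinct integers
satisfying `ψ` iff `◇ψ_n ∨ @_{(ψ_n ∧ ¬◇ψ_n)}⊤` holds at `w` — i.e. over (ℤ,<) the counting
operator `∃_{≥n}` is expressible in ML(DD). -/
theorem count_expressible_over_int (ψ : MLDD) (n : ℕ) (hn : 1 ≤ n)
    (V : ℕ → ℤ → Prop) (w : ℤ) :
    (∃ f : Fin n → ℤ, Function.Injective f ∧ ∀ k : Fin n, sat (zModel V) (f k) ψ) ↔
      sat (zModel V) w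
        (.or (.dia (psiIter ψ (n - 1)))
          (.dd (mand (psiIter ψ (n - 1)) (.neg (.dia (psiIter ψ (n - 1))))) mtop)) := by
  obtain ⟨k, rfl⟩ : ∃ k, n = k + 1 := ⟨n - 1, by omega⟩
  have hR : ∀ u v : (zModel V).W, (zModel V).R u v ↔ u < v := fun _ _ => Iff.rfl
  calc _ ↔ ∃ s : Finset ℤ, s.card = k + 1 ∧ ∀ x ∈ s, sat (zModel V) x ψ :=
        exists_injective_fin_iff_exists_finset
    _ ↔ {v : ℤ | sat (zModel V) v (psiIter ψ k)}.Nonempty := (exists_sat_psiIter_iff hR).symm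
    _ ↔ _ := (Int.exists_gt_mem_or_exists_isGreatest_iff w).symm
    _ ↔ _ := (sat_dia_or_dd_greatest_iff hR).symm
end

section
/- For every MLC-formula φ there exists an ML(DD)-formula φ' such that for every model M based on the integer frame (ℤ,<) and every w ∈ ℤ: M,w ⊨ φ if and only if M,w ⊨ φ'. Together with the converse translation (which holds over all frames), this shows that ML(DD) and MLC have the same expressive power over the integer frame. -/
/-! At least `n` integers satisfy `χ` iff some world has `n` of them in its strict future, since a
finite set of integers is bounded below; listed in increasing order, they witness the nested
formula `◇(χ ∧ ◇(χ ∧ ⋯))`. What remains is a global modality, and ML(DD) has one over `ℤ`: if `χ`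
holds somewhere but nowhere in the future of the current world, the `χ`-worlds are bounded above,
so the last of them is the unique world satisfying `χ ∧ ¬◇χ`; hence `◇χ ∨ @_{χ ∧ ¬◇χ} ⊤` says
that `χ` holds somewhere. Conversely, `@_φ ψ` says that exactly one world satisfies `φ` and that
it satisfies `ψ`, i.e. `∃_{≥1} (φ ∧ ψ) ∧ ¬∃_{≥2} φ`, on every frame. -/

theorem exists_injective_iff_exists_strictMono {α : Type*} [LinearOrder α] (P : α → Prop)
    (n : ℕ) :
    (∃ f : Fin n → α, Function.Injective f ∧ ∀ k, P (f k)) ↔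
      ∃ f : Fin n → α, StrictMono f ∧ ∀ k, P (f k) := by
  classical
  refine ⟨fun ⟨f, hf, hP⟩ => ?_, fun ⟨f, hf, hP⟩ => ⟨f, hf.injective, hP⟩⟩
  have hcard : (Finset.univ.image f).card = n := by
    rw [Finset.card_image_of_injective _ hf, Finset.card_univ, Fintype.card_fin]
  refine ⟨(Finset.univ.image f).orderEmbOfFin hcard, OrderEmbedding.strictMono _, fun k => ?_⟩
  obtain ⟨j, -, hj⟩ := Finset.mem_image.1 (Finset.orderEmbOfFin_mem _ hcard k)
  exact hj ▸ hP j

theorem exists_unique_and_iff {α : Type*} (P Q : α → Prop) :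
    (∃ v, P v ∧ Q v ∧ ∀ v', v' ≠ v → ¬P v') ↔
      (∃ v, P v ∧ Q v) ∧ ¬∃ a b, a ≠ b ∧ P a ∧ P b := by
  constructor
  · rintro ⟨v, hP, hQ, huniq⟩
    refine ⟨⟨v, hP, hQ⟩, fun ⟨a, b, hab, ha, hb⟩ => ?_⟩
    by_cases hav : a = v
    · exact huniq b (hav ▸ hab.symm) hb
    · exact huniq a hav ha
  · rintro ⟨⟨v, hP, hQ⟩, hmul⟩
    exact ⟨v, hP, hQ, fun v' hne hv' => hmul ⟨v', v, hne, hv', hP⟩⟩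

theorem exists_lt_and_strictMono_iff {α : Type*} [LinearOrder α] [NoMinOrder α] [Nonempty α]
    (P : α → Prop) (n : ℕ) :
    (∃ w, ∃ f : Fin n → α, StrictMono f ∧ ∀ k, w < f k ∧ P (f k)) ↔
      ∃ f : Fin n → α, StrictMono f ∧ ∀ k, P (f k) := by
  refine ⟨fun ⟨_, f, hf, hP⟩ => ⟨f, hf, fun k => (hP k).2⟩, fun ⟨f, hf, hP⟩ => ?_⟩
  obtain ⟨b, hb⟩ := (Set.finite_range f).bddBelow
  obtain ⟨w, hw⟩ := exists_lt b
  exact ⟨w, f, hf, fun k => ⟨hw.trans_le (hb ⟨k, rfl⟩), hP k⟩⟩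

def MLC.conj (φ ψ : MLC) : MLC := .neg (.or (.neg φ) (.neg ψ))

namespace MLDD

def top : MLDD := .or (.prop 0) (.neg (.prop 0))

def conj (φ ψ : MLDD) : MLDD := .neg (.or (.neg φ) (.neg ψ))

def futureCount : ℕ → MLDD → MLDD
  | 0, _ => top
  | n + 1, χ => .dia (conj χ (futureCount n χ))

def somewhere (χ : MLDD) : MLDD := .or (.dia χ) (.dd (conj χ (.neg (.dia χ))) top)

def toMLC_s16 : MLDD → MLC
  | .prop p => .prop p
  | .neg φ => .neg φ.toMLC_s16
  | .or φ ψ => .or φ.toMLC_s16 ψ.toMLC_s16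
  | .dia φ => .dia φ.toMLC_s16
  | .dd φ ψ =>
    .conj (.count 1 (.conj φ.toMLC_s16 ψ.toMLC_s16)) (.neg (.count 2 φ.toMLC_s16))

end MLDD

def MLC.toMLDD : MLC → MLDD
  | .prop p => .prop p
  | .neg φ => .neg φ.toMLDD
  | .or φ ψ => .or φ.toMLDD ψ.toMLDD
  | .dia φ => .dia φ.toMLDD
  | .count n φ => .somewhere (.futureCount n φ.toMLDD)

section
variable (M : Model)

theorem sat_top (w : M.W) : sat M w .top := em _

theorem sat_conj (w : M.W) (φ ψ : MLDD) : sat M w (.conj φ ψ) ↔ sat M w φ ∧ sat M w ψ := by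
  simp [MLDD.conj, sat]

theorem satC_count_one (w : M.W) (φ : MLC) : satC M w (.count 1 φ) ↔ ∃ v, satC M v φ := by
  simp [satC, Fin.exists_fin_succ_pi, Function.injective_of_subsingleton]

theorem satC_count_two (w : M.W) (φ : MLC) :
    satC M w (.count 2 φ) ↔ ∃ u v, u ≠ v ∧ satC M u φ ∧ satC M v φ := by
  simp [satC, Fin.exists_fin_succ_pi, Fin.forall_fin_succ, Fin.cons_injective_iff,
    Function.injective_of_subsingleton, eq_comm]

theorem satC_conj (w : M.W) (φ ψ : MLC) : satC M w (.conj φ ψ) ↔ satC M w φ ∧ satC M w ψ := by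
  simp [MLC.conj, satC]

theorem sat_iff_satC_toMLC (φ : MLDD) (w : M.W) : sat M w φ ↔ satC M w φ.toMLC_s16 := by
  induction φ generalizing w with
  | prop p => rfl
  | neg φ ih => exact not_congr (ih w)
  | or φ ψ ihφ ihψ => exact or_congr (ihφ w) (ihψ w)
  | dia φ ih => exact exists_congr fun v => and_congr_right' (ih v)
  | dd φ ψ ihφ ihψ =>
    rw [MLDD.toMLC_s16, satC_conj, satC_count_one, satC, satC_count_two]
    simp only [sat, satC_conj, ihφ, ihψ]
    exact exists_unique_and_iff _ _

end

section
variable (V : ℕ → ℤ → Prop)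

theorem sat_futureCount (χ : MLDD) (n : ℕ) (w : ℤ) :
    sat (zModel V) w (.futureCount n χ) ↔
      ∃ f : Fin n → ℤ, StrictMono f ∧ ∀ k, w < f k ∧ sat (zModel V) (f k) χ := by
  induction n generalizing w with
  | zero =>
    exact iff_of_true (sat_top (zModel V) w) ⟨finZeroElim, Subsingleton.strictMono _, finZeroElim⟩
  | succ n ih =>
    simp only [Fin.exists_fin_succ_pi, Fin.strictMono_cons, Fin.forall_fin_succ, Fin.cons_zero,
      Fin.cons_succ]
    constructor
    · rintro ⟨v, hwv, hv⟩
      obtain ⟨hχ, hrest⟩ := (sat_conj _ v _ _).1 hv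
      obtain ⟨f, hf, hfχ⟩ := (ih v).1 hrest
      exact ⟨v, f, ⟨fun k => (hfχ k).1, hf⟩, ⟨hwv, hχ⟩,
        fun k => ⟨hwv.trans (hfχ k).1, (hfχ k).2⟩⟩
    · rintro ⟨v, f, ⟨hvf, hf⟩, ⟨hwv, hχ⟩, hfχ⟩
      refine ⟨v, hwv, (sat_conj (zModel V) v _ _).2 ⟨hχ, (ih v).2 ⟨f, hf, fun k => ?_⟩⟩⟩
      exact ⟨hvf k, (hfχ k).2⟩

theorem sat_somewhere (χ : MLDD) (w : ℤ) :
    sat (zModel V) w (.somewhere χ) ↔ ∃ v : ℤ, sat (zModel V) v χ := by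
  constructor
  · rintro (⟨v, -, hv⟩ | ⟨v, hv, -, -⟩)
    · exact ⟨v, hv⟩
    · exact ⟨v, ((sat_conj (zModel V) v _ _).1 hv).1⟩
  · rintro ⟨v, hv⟩
    by_cases hbdd : BddAbove {u : ℤ | sat (zModel V) u χ}
    · obtain ⟨g, hg, hmax⟩ : ∃ g, sat (zModel V) g χ ∧ ∀ u : ℤ, sat (zModel V) u χ → u ≤ g :=
        ⟨_, Int.csSup_mem ⟨v, hv⟩ hbdd, fun _ hu => le_csSup hbdd hu⟩
      have hlast (u : ℤ) : sat (zModel V) u (.conj χ (.neg (.dia χ))) ↔ u = g := by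
        refine ⟨fun hu => ?_, fun hug => (sat_conj (zModel V) u _ _).2 ?_⟩
        · obtain ⟨hχ, hnext⟩ := (sat_conj (zModel V) u _ _).1 hu
          exact (hmax u hχ).eq_of_not_lt fun hlt => hnext ⟨g, hlt, hg⟩
        · exact ⟨hug ▸ hg, fun ⟨u', hgu', hu'⟩ => (hmax u' hu').not_gt (hug ▸ hgu')⟩
      exact .inr ⟨g, (hlast g).2 rfl, sat_top (zModel V) g, fun u hne hu => hne ((hlast u).1 hu)⟩
    · obtain ⟨u, hu, hwu⟩ := not_bddAbove_iff.1 hbdd w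
      exact .inl ⟨u, hwu, hu⟩

theorem sat_somewhere_futureCount (χ : MLDD) (n : ℕ) (w : ℤ) :
    sat (zModel V) w (.somewhere (.futureCount n χ)) ↔
      ∃ f : Fin n → ℤ, Function.Injective f ∧ ∀ k, sat (zModel V) (f k) χ :=
  (sat_somewhere V _ w).trans <| (exists_congr fun v => sat_futureCount V χ n v).trans <|
    (exists_lt_and_strictMono_iff (fun v : ℤ => sat (zModel V) v χ) n).trans
      (exists_injective_iff_exists_strictMono (fun v : ℤ => sat (zModel V) v χ) n).symm

theorem satC_iff_sat_toMLDD (φ : MLC) (w : ℤ) :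
    satC (zModel V) w φ ↔ sat (zModel V) w φ.toMLDD := by
  induction φ generalizing w with
  | prop p => rfl
  | neg φ ih => exact not_congr (ih w)
  | or φ ψ ihφ ihψ => exact or_congr (ihφ w) (ihψ w)
  | dia φ ih => exact exists_congr fun v => and_congr_right' (ih v)
  | count n φ ih =>
    refine .trans ?_ (sat_somewhere_futureCount V _ n w).symm
    exact exists_congr fun (f : Fin n → ℤ) => and_congr_right' (forall_congr' fun k => ih (f k))

end

/-- Over the integer frame (ℤ,<), every MLC-formula has an equivalent ML(DD)-formula;
together with the converse translation (which holds over all frames, hence in particular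
over (ℤ,<)), ML(DD) and MLC have the same expressive power over the integer frame. -/
theorem mlc_equals_mldd_over_int :
    (∀ φ : MLC, ∃ φ' : MLDD, ∀ (V : ℕ → ℤ → Prop) (w : ℤ),
      satC (zModel V) w φ ↔ sat (zModel V) w φ') ∧
    (∀ φ' : MLDD, ∃ φ : MLC, ∀ (V : ℕ → ℤ → Prop) (w : ℤ),
      sat (zModel V) w φ' ↔ satC (zModel V) w φ) :=
  ⟨fun φ => ⟨φ.toMLDD, fun V => satC_iff_sat_toMLDD V φ⟩,
    fun φ' => ⟨φ'.toMLC_s16, fun V => sat_iff_satC_toMLC (zModel V) φ'⟩⟩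
end
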